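/- Let k ≥ 2 be an integer, and for 0 ≤ ε ≤ 2/((k+1)(k+2)) define f_{k,ε} : ℕ → [0,1] by f_{k,ε}(0) = 1, f_{k,ε}(1) = 1−ε, f_{k,ε}(d) = 2/(d+1) for 2 ≤ d ≤ k, and f_{k,ε}(d) = min{(k+1)ε, 2/(d+1)} for d ≥ k+1. If φ : ℕ → [0,1] is any lower bound for α_{𝒞_k} (i.e., α_{𝒞_k}(G) ≥ ∑_{v ∈ V(G)} φ(d(v)) for every graph G), then there exists ε with 0 ≤ ε ≤ 2/((k+1)(k+2)) such that φ(d) ≤ f_{k,ε}(d) for every d ∈ ℕ. -/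

import Mathlib

open SimpleGraph Finset

/-- A graph is a forest of caterpillars if it is acyclic and the set of its
vertices of degree at least 2 induces a subgraph of maximum degree at most 2
(equivalently, every connected component is a caterpillar). -/
def IsCaterpillarForest {α : Type*} (H : SimpleGraph α) : Prop :=
  H.IsAcyclic ∧ ∀ v, 2 ≤ (H.neighborSet v).ncard →
    {w ∈ H.neighborSet v | 2 ≤ (H.neighborSet w).ncard}.ncard ≤ 2

/-- The lower-bound function f_{k,ε} for forests of caterpillars of maximum degree at most k. -/
noncomputable def fCk (k : ℕ) (ε : ℝ) (d : ℕ) : ℝ :=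
  if d = 0 then 1
  else if d = 1 then 1 - ε
  else if d ≤ k then 2 / ((d : ℝ) + 1)
  else min (((k : ℝ) + 1) * ε) (2 / ((d : ℝ) + 1))

section helpers

def catAdj (m k : ℕ) (p q : Fin m × Fin (k+2)) : Prop :=
  p ≠ q ∧ ((p.2 = 0 ∧ q.2 = 0) ∨ (p.1 = q.1 ∧ (p.2 = 0 ∨ q.2 = 0)))

instance (m k : ℕ) : DecidableRel (catAdj m k) := fun p q => by
  unfold catAdj; infer_instance

def catG (m k : ℕ) : SimpleGraph (Fin m × Fin (k+2)) where
  Adj := catAdj m k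
  symm := ⟨by rintro p q ⟨h1, h2⟩; exact ⟨h1.symm, by tauto⟩⟩
  loopless := ⟨by rintro p ⟨h1, _⟩; exact h1 rfl⟩

instance (m k : ℕ) : DecidableRel (catG m k).Adj := fun p q =>
  inferInstanceAs (Decidable (catAdj m k p q))

lemma catG_degree_center (m k : ℕ) (hm : 1 ≤ m) (i : Fin m) :
    (catG m k).degree (i, 0) = m + k := by
  rw [degree, neighborFinset_eq_filter]
  have : Finset.univ.filter ((catG m k).Adj (i, 0)) =
      ((Finset.univ.erase i).image fun j => ((j, 0) : Fin m × Fin (k+2))) ∪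
      ((Finset.univ.erase 0).image fun b => ((i, b) : Fin m × Fin (k+2))) := by
    ext ⟨j, b⟩
    by_cases hb : b = 0 <;> by_cases hj : j = i <;>
      (simp only [Finset.mem_filter, Finset.mem_univ, true_and]; simp [catG, catAdj, Prod.ext_iff, hb, hj, Ne.symm, eq_comm])
  rw [this, Finset.card_union_of_disjoint, Finset.card_image_of_injective,
    Finset.card_image_of_injective]
  · rw [Finset.card_erase_of_mem (Finset.mem_univ i), Finset.card_erase_of_mem (Finset.mem_univ 0)]
    simp only [Finset.card_univ, Fintype.card_fin]
    omega
  · intro a b h; simpa using (Prod.ext_iff.mp h).2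
  · intro a b h; simpa using (Prod.ext_iff.mp h).1
  · rw [Finset.disjoint_left]
    rintro ⟨j, b⟩ h1 h2
    simp only [Finset.mem_image, Finset.mem_erase, Prod.mk.injEq] at h1 h2
    obtain ⟨j', -, -, hb0⟩ := h1
    obtain ⟨b', ⟨hb', -⟩, -, hb⟩ := h2
    exact hb' (hb.trans hb0.symm)

lemma catG_degree_leaf (m k : ℕ) (i : Fin m) (b : Fin (k+2)) (hb : b ≠ 0) :
    (catG m k).degree (i, b) = 1 := by
  rw [degree, neighborFinset_eq_filter]
  have : Finset.univ.filter ((catG m k).Adj (i, b)) = {((i, 0) : Fin m × Fin (k+2))} := by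
    ext ⟨j, c⟩
    by_cases hc : c = 0 <;> by_cases hj : j = i <;>
      (simp only [Finset.mem_filter, Finset.mem_univ, true_and]; simp [catG, catAdj, Prod.ext_iff, hb, hc, hj, Ne.symm, eq_comm])
  rw [this, Finset.card_singleton]

lemma catG_card_le (m k : ℕ) (S : Finset (Fin m × Fin (k+2)))
    (hdegk : ∀ v : ((S : Set (Fin m × Fin (k+2)))),
      ((((catG m k).induce (S : Set (Fin m × Fin (k+2)))).neighborSet v)).ncard ≤ k) :
    S.card ≤ m * (k+1) := by
  classical
  rw [Finset.card_eq_sum_card_fiberwise (f := fun p => p.1) (t := Finset.univ)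
    (fun x _ => Finset.mem_univ _)]
  have key : ∀ i : Fin m, (S.filter fun p => p.1 = i).card ≤ k+1 := by
    intro i
    by_cases h0 : ((i, 0) : Fin m × Fin (k+2)) ∈ S
    · have h0' : ((i, 0) : Fin m × Fin (k+2)) ∈ (S : Set (Fin m × Fin (k+2))) := h0
      set v : ((S : Set (Fin m × Fin (k+2)))) := ⟨(i, 0), h0'⟩ with hv
      set N := (((catG m k).induce (S : Set (Fin m × Fin (k+2)))).neighborSet v) with hN
      have hfin : N.Finite := Set.toFinite _
      have hk := hdegk v
      rw [Set.ncard_eq_toFinset_card N hfin] at hk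
      have hmem : ((i, 0) : Fin m × Fin (k+2)) ∈ S.filter (fun p => p.1 = i) := by
        simp [h0]
      rw [← Finset.card_erase_add_one hmem]
      have hle : ((S.filter (fun p => p.1 = i)).erase (i, 0)).card ≤ hfin.toFinset.card := by
        apply Finset.card_le_card_of_injOn
          (fun p => if hp : p ∈ (S : Set (Fin m × Fin (k+2))) then ⟨p, hp⟩ else v)
        · intro p hp
          rw [Finset.mem_coe, Finset.mem_erase, Finset.mem_filter] at hp
          obtain ⟨hpne, hpS, hpi⟩ := hp
          have hpS' : p ∈ (S : Set (Fin m × Fin (k+2))) := hpS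
          beta_reduce
          rw [Finset.mem_coe]
          rw [dif_pos hpS', Set.Finite.mem_toFinset]
          have hp2 : p.2 ≠ 0 := by
            intro h
            exact hpne (Prod.ext hpi h)
          show ((catG m k).induce _).Adj v ⟨p, hpS'⟩
          rw [comap_adj]
          exact ⟨fun h => hp2 (congrArg Prod.snd h).symm, Or.inr ⟨hpi.symm, Or.inl rfl⟩⟩
        · intro p hp q hq hpq
          rw [Finset.mem_coe, Finset.mem_erase, Finset.mem_filter] at hp hq
          have hpS' : p ∈ (S : Set (Fin m × Fin (k+2))) := hp.2.1
          have hqS' : q ∈ (S : Set (Fin m × Fin (k+2))) := hq.2.1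
          simp only [dif_pos hpS', dif_pos hqS'] at hpq
          exact congrArg Subtype.val hpq
      omega
    · calc (S.filter fun p => p.1 = i).card ≤ (Finset.univ.erase (0 : Fin (k+2))).card := by
            apply Finset.card_le_card_of_injOn (fun p => p.2)
            · intro p hp
              rw [Finset.mem_coe, Finset.mem_filter] at hp
              rw [Finset.mem_coe, Finset.mem_erase]
              refine ⟨fun h => h0 ?_, Finset.mem_univ _⟩
              have hpe : p = ((i, 0) : Fin m × Fin (k+2)) := Prod.ext hp.2 h
              rw [← hpe]
              exact hp.1
            · intro p hp q hq hpq
              rw [Finset.mem_coe, Finset.mem_filter] at hp hq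
              exact Prod.ext (hp.2.trans hq.2.symm) hpq
      _ = k + 1 := by
            rw [Finset.card_erase_of_mem (Finset.mem_univ _), Finset.card_univ,
              Fintype.card_fin]
            omega
  calc ∑ i : Fin m, (S.filter fun p => p.1 = i).card ≤ ∑ _i : Fin m, (k+1) :=
        Finset.sum_le_sum fun i _ => key i
  _ = m * (k+1) := by rw [Finset.sum_const, Finset.card_univ, Fintype.card_fin, smul_eq_mul]

lemma not_acyclic_of_triangle {β : Type*} {H : SimpleGraph β} {a b c : β}
    (hab : H.Adj a b) (hbc : H.Adj b c) (hca : H.Adj c a) :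
    ¬ H.IsAcyclic := by
  intro hA
  have h1 := hab.ne
  have h2 := hbc.ne
  have h3 := hca.ne
  refine hA (Walk.cons hab (Walk.cons hbc (Walk.cons hca Walk.nil))) ?_
  rw [Walk.cons_isCycle_iff]
  constructor
  · rw [Walk.isPath_def]
    simp [h2, h3, Ne.symm h3, Ne.symm h1, h1]
  · simp only [Walk.edges_cons, Walk.edges_nil, List.mem_cons, List.not_mem_nil, or_false]
    rintro (h | h) <;> rw [Sym2.eq_iff] at h <;> tauto

variable {k : ℕ} {φ : ℕ → ℝ}

lemma keyA
    (hlb : ∀ (V : Type) [Fintype V] [DecidableEq V] (G : SimpleGraph V) [DecidableRel G.Adj],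
      ∃ S : Finset V, IsCaterpillarForest (G.induce (S : Set V)) ∧
        (∀ v, ((G.induce (S : Set V)).neighborSet v).ncard ≤ k) ∧
        ∑ v, φ (G.degree v) ≤ (S.card : ℝ))
    (d : ℕ) : ((d:ℝ)+1) * φ d ≤ 2 := by
  obtain ⟨S, hcf, -, hsum⟩ := hlb (Fin (d+1)) ⊤
  have hdeg : ∀ v : Fin (d+1), (⊤ : SimpleGraph (Fin (d+1))).degree v = d := by
    intro v; simp
  have hsum' : ((d:ℝ)+1) * φ d ≤ (S.card : ℝ) := by
    calc ((d:ℝ)+1) * φ d = ∑ _v : Fin (d+1), φ d := by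
          rw [Finset.sum_const, Finset.card_univ, Fintype.card_fin, nsmul_eq_mul]; push_cast; ring
    _ = ∑ v : Fin (d+1), φ ((⊤ : SimpleGraph (Fin (d+1))).degree v) := by
          simp [hdeg]
    _ ≤ (S.card : ℝ) := hsum
  have hS2 : S.card ≤ 2 := by
    by_contra hgt
    push_neg at hgt
    obtain ⟨a, ha, b, hb, hne⟩ := (Finset.one_lt_card (s := S)).mp (by omega)
    have : ((S.erase a).erase b).Nonempty := by
      rw [← Finset.card_pos]
      have hc1 : (S.erase a).card = S.card - 1 := Finset.card_erase_of_mem ha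
      have hc2 : ((S.erase a).erase b).card ≥ (S.erase a).card - 1 := Finset.pred_card_le_card_erase
      omega
    obtain ⟨c, hc⟩ := this
    have hcb : c ≠ b := (Finset.mem_erase.mp hc).1
    have hca' : c ≠ a := (Finset.mem_erase.mp (Finset.mem_erase.mp hc).2).1
    have hcS : c ∈ S := (Finset.mem_erase.mp (Finset.mem_erase.mp hc).2).2
    have hadj : ∀ (x y : (S : Set (Fin (d+1)))), (x : Fin (d+1)) ≠ y →
        ((⊤ : SimpleGraph (Fin (d+1))).induce (S : Set (Fin (d+1)))).Adj x y := by
      intro x y hxy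
      rw [comap_adj]
      exact hxy
    refine not_acyclic_of_triangle (a := ⟨a, ha⟩) (b := ⟨b, hb⟩) (c := ⟨c, hcS⟩)
      (hadj _ _ hne) (hadj _ _ (Ne.symm hcb)) (hadj _ _ hca') hcf.1
  calc ((d:ℝ)+1) * φ d ≤ (S.card : ℝ) := hsum'
  _ ≤ 2 := by exact_mod_cast hS2

lemma keyB
    (hlb : ∀ (V : Type) [Fintype V] [DecidableEq V] (G : SimpleGraph V) [DecidableRel G.Adj],
      ∃ S : Finset V, IsCaterpillarForest (G.induce (S : Set V)) ∧
        (∀ v, ((G.induce (S : Set V)).neighborSet v).ncard ≤ k) ∧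
        ∑ v, φ (G.degree v) ≤ (S.card : ℝ))
    (m : ℕ) (hm : 1 ≤ m) :
    φ (m + k) + ((k:ℝ)+1) * φ 1 ≤ (k:ℝ)+1 := by
  obtain ⟨S, -, hdegk, hsum⟩ := hlb (Fin m × Fin (k+2)) (catG m k)
  have hcard := catG_card_le m k S hdegk
  have hsum' : (m:ℝ) * (φ (m+k) + ((k:ℝ)+1) * φ 1)
      = ∑ p : Fin m × Fin (k+2), φ ((catG m k).degree p) := by
    rw [Fintype.sum_prod_type]
    have inner : ∀ i : Fin m, ∑ b : Fin (k+2), φ ((catG m k).degree (i, b))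
        = φ (m+k) + ((k:ℝ)+1) * φ 1 := by
      intro i
      rw [Fin.sum_univ_succ]
      rw [catG_degree_center m k hm i]
      have : ∀ b : Fin (k+1), φ ((catG m k).degree (i, Fin.succ b)) = φ 1 := by
        intro b
        rw [catG_degree_leaf m k i b.succ (Fin.succ_ne_zero b)]
      rw [Finset.sum_congr rfl (fun b _ => this b), Finset.sum_const, Finset.card_univ,
        Fintype.card_fin, nsmul_eq_mul]
      push_cast
      ring
    rw [Finset.sum_congr rfl (fun i _ => inner i), Finset.sum_const, Finset.card_univ,
      Fintype.card_fin, nsmul_eq_mul]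
  have hmR : (0:ℝ) < m := by exact_mod_cast hm
  have h1 : (m:ℝ) * (φ (m+k) + ((k:ℝ)+1) * φ 1) ≤ (m:ℝ) * ((k:ℝ)+1) := by
    rw [hsum']
    calc ∑ p : Fin m × Fin (k+2), φ ((catG m k).degree p) ≤ (S.card : ℝ) := hsum
    _ ≤ (m:ℝ) * ((k:ℝ)+1) := by exact_mod_cast hcard
  exact le_of_mul_le_mul_left h1 hmR

end helpers

/-- Every lower bound φ : ℕ → [0,1] for induced forests of caterpillars of maximum degree
at most k (k ≥ 2) is dominated by f_{k,ε} for some 0 ≤ ε ≤ 2/((k+1)(k+2)). -/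
theorem stmt11 (k : ℕ) (hk : 2 ≤ k) (φ : ℕ → ℝ) (hφ : ∀ d, 0 ≤ φ d ∧ φ d ≤ 1)
    (hlb : ∀ (V : Type) [Fintype V] [DecidableEq V] (G : SimpleGraph V) [DecidableRel G.Adj],
      ∃ S : Finset V, IsCaterpillarForest (G.induce (S : Set V)) ∧
        (∀ v, ((G.induce (S : Set V)).neighborSet v).ncard ≤ k) ∧
        ∑ v, φ (G.degree v) ≤ (S.card : ℝ)) :
    ∃ ε : ℝ, 0 ≤ ε ∧ ε ≤ 2 / (((k : ℝ) + 1) * ((k : ℝ) + 2)) ∧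
      ∀ d, φ d ≤ fCk k ε d := by
  have hk1 : (0:ℝ) < (k:ℝ) + 1 := by positivity
  have hk2 : (0:ℝ) < (k:ℝ) + 2 := by positivity
  refine ⟨min (1 - φ 1) (2 / (((k : ℝ) + 1) * ((k : ℝ) + 2))), ?_, min_le_right _ _, ?_⟩
  · apply le_min
    · linarith [(hφ 1).2]
    · positivity
  · intro d
    set ε := min (1 - φ 1) (2 / (((k : ℝ) + 1) * ((k : ℝ) + 2))) with hε
    have hA : ∀ d : ℕ, φ d ≤ 2 / ((d:ℝ) + 1) := by
      intro d
      have h := keyA hlb d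
      have hd1 : (0:ℝ) < (d:ℝ) + 1 := by positivity
      rw [le_div_iff₀ hd1, mul_comm]
      exact h
    rcases Nat.eq_zero_or_pos d with rfl | hd0
    · simpa [fCk] using (hφ 0).2
    rcases eq_or_lt_of_le (Nat.succ_le_of_lt hd0) with hd1 | hd1
    · rw [fCk, if_neg (by omega), if_pos (by omega)]
      have : ε ≤ 1 - φ 1 := min_le_left _ _
      rw [← hd1]
      linarith
    by_cases hdk : d ≤ k
    · rw [fCk, if_neg (by omega), if_neg (by omega), if_pos hdk]
      exact hA d
    · rw [fCk, if_neg (by omega), if_neg (by omega), if_neg hdk]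
      refine le_min ?_ (hA d)
      have hmin : ((k:ℝ)+1) * ε
          = min (((k:ℝ)+1) * (1 - φ 1)) (((k:ℝ)+1) * (2 / (((k : ℝ) + 1) * ((k : ℝ) + 2)))) := by
        rw [hε, mul_min_of_nonneg _ _ (le_of_lt hk1)]
      rw [hmin]
      refine le_min ?_ ?_
      · -- φ d ≤ (k+1)(1 - φ 1) from keyB with m = d - k
        have hm : 1 ≤ d - k := by omega
        have hB := keyB hlb (d - k) hm
        have : d - k + k = d := by omega
        rw [this] at hB
        linarith
      · -- φ d ≤ (k+1) * 2/((k+1)(k+2)) = 2/(k+2)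
        have heq : ((k:ℝ)+1) * (2 / (((k : ℝ) + 1) * ((k : ℝ) + 2))) = 2 / ((k:ℝ) + 2) := by
          field_simp
        rw [heq]
        calc φ d ≤ 2 / ((d:ℝ) + 1) := hA d
        _ ≤ 2 / ((k:ℝ) + 2) := by
            apply div_le_div_of_nonneg_left (by norm_num) hk2
            have hkd : k + 1 ≤ d := by omega
            have hkd' : ((k:ℝ) + 1) ≤ (d:ℝ) := by exact_mod_cast hkd
            linarith
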